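/- arXiv:2308.08524 — 2 statements merged into one kernel-verified Lean document; each statement's English description precedes it below -/
import Mathlib

section
/- Let p(z) = z^s + b_1 z^{s−1} + … + b_s be a monic real polynomial of degree s ≥ 2 whose Hurwitz determinants satisfy: b_s > 0, det(G_1) > 0, …, det(G_{s−2}) > 0 and det(G_{s−1}) = 0. Then there exists a real number ω > 0 such that iω and −iω are simple roots of p (viewed as a complex polynomial), and p has no other roots on the imaginary axis; in particular p has a single pair of purely imaginary roots. -/
open Matrix Polynomial Complex

/-- The `l`-th Hurwitz matrix of a sequence of coefficients `c : ℤ → ℝ`: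
its `(k, j)` entry (1-based) is `c (2k - j)`. -/
noncomputable def hurwitzMatrix (c : ℤ → ℝ) (l : ℕ) : Matrix (Fin l) (Fin l) ℝ :=
  Matrix.of fun k j : Fin l => c (2 * ((k : ℤ) + 1) - ((j : ℤ) + 1))

/-!
Routh's algorithm. With `λ = b₀ / b₁`, subtracting `λ` times each odd-indexed coefficient from
the even-indexed coefficient before it kills `b₀`; shifting the indices down by one gives a
polynomial of degree `s - 1` whose Hurwitz determinants are those of `p` divided by `b₁`
(a column operation on `G_{k+1}`, then expansion along the first row). As `b₁ = det G_1 > 0`,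
the hypotheses pass down, and after `s - 2` steps we reach a quadratic with `det G_1 = b₁ = 0`,
i.e. `b₀ z² + b₂` with `b₀, b₂ > 0`.

Write `p(z) = h(z²) + z g(z²)`. Then `p(iy) = h(-y²) + i y g(-y²)`, so the nonzero imaginary
roots of `p` are the `±i√(-u)` for the negative common roots `u` of `h` and `g`, and such a root
is simple unless `h'` and `g'` both vanish at `u`. A Routh step changes `(h, g)` only by adding a
polynomial multiple of one of them to the other, which preserves "exactly one common real root,
negative, where `h'` and `g'` do not both vanish"; for `b₀ z² + b₂` this holds with `u = -b₂/b₀`.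
-/

lemma hurwitzMatrix_apply (c : ℤ → ℝ) (n : ℕ) (i j : Fin n) :
    hurwitzMatrix c n i j = c (2 * i - j + 1) := by
  simp only [hurwitzMatrix, of_apply]
  ring_nf

lemma det_hurwitzMatrix_one (c : ℤ → ℝ) : (hurwitzMatrix c 1).det = c 1 := by
  simp [hurwitzMatrix_apply]

def routhElim (c : ℤ → ℝ) (t : ℝ) (m : ℤ) : ℝ :=
  if Even m then c m - t * c (m + 1) else c m

lemma routhElim_eq_zero_of_neg (c : ℤ → ℝ) (hc : ∀ m < 0, c m = 0) (t : ℝ) :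
    ∀ m < 0, routhElim c t m = 0 := by
  intro m hm
  unfold routhElim
  split_ifs with he
  · rw [hc m hm, hc (m + 1) (by obtain ⟨k, hk⟩ := he; omega)]
    ring
  · exact hc m hm

lemma routhElim_eq_zero_of_nonpos (c : ℤ → ℝ) (hc : ∀ m < 0, c m = 0) (hc1 : c 1 ≠ 0) :
    ∀ m ≤ 0, routhElim c (c 0 / c 1) m = 0 := by
  intro m hm
  rcases hm.lt_or_eq with hm | rfl
  · exact routhElim_eq_zero_of_neg c hc _ m hm
  · simp [routhElim, hc1]

noncomputable def routhStep (c : ℤ → ℝ) (m : ℤ) : ℝ :=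
  routhElim c (c 0 / c 1) (m + 1)

lemma routhStep_zero (c : ℤ → ℝ) : routhStep c 0 = c 1 := by
  simp [routhStep, routhElim]

lemma routhStep_of_eq_zero (c : ℤ → ℝ) {m : ℤ} (hm : c (m + 2) = 0) :
    routhStep c m = c (m + 1) := by
  simp [routhStep, routhElim, add_assoc, hm]

/-- Right multiplication by this matrix subtracts `t` times column `j - 1` from every odd
column `j` (0-based). -/
def routhElimMatrix (t : ℝ) (n : ℕ) : Matrix (Fin n) (Fin n) ℝ :=
  1 - t • of fun i j : Fin n => if (i : ℕ) + 1 = j ∧ Odd (j : ℕ) then 1 else 0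

lemma det_routhElimMatrix (t : ℝ) (n : ℕ) : (routhElimMatrix t n).det = 1 := by
  rw [det_of_isUpperTriangular]
  · simp [routhElimMatrix, one_apply]
  · intro i j (hji : j < i)
    have : ¬(i : ℕ) + 1 = j := by omega
    simp [routhElimMatrix, one_apply, hji.ne', this]

lemma hurwitzMatrix_mul_routhElimMatrix (c : ℤ → ℝ) (t : ℝ) (n : ℕ) :
    hurwitzMatrix c n * routhElimMatrix t n = hurwitzMatrix (routhElim c t) n := by
  ext i j
  have hprev : ∑ m : Fin n, hurwitzMatrix c n i m *
      (if (m : ℕ) + 1 = j ∧ Odd (j : ℕ) then 1 else 0) =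
      if Odd (j : ℕ) then c (2 * i - j + 2) else 0 := by
    split_ifs with hj
    · obtain ⟨k, hk⟩ := hj
      rw [Finset.sum_eq_single ⟨2 * k, by omega⟩]
      · simp only [hurwitzMatrix_apply, hk]
        push_cast
        simp only [true_and, odd_two_mul_add_one, if_true, mul_one]
        ring_nf
      · intro m _ hm
        rw [if_neg (fun h => hm (Fin.ext (by simp; omega))), mul_zero]
      · simp
    · simp [hj]
  have hparity : Even (2 * (i : ℤ) - j + 1) ↔ Odd (j : ℕ) := by
    rw [Int.even_add_one, Int.even_sub]
    simp
  rw [routhElimMatrix, Matrix.mul_sub, Matrix.mul_one, Matrix.mul_smul, Matrix.sub_apply,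
    Matrix.smul_apply, mul_apply]
  simp only [of_apply]
  rw [hprev]
  simp only [hurwitzMatrix_apply, routhElim]
  split_ifs <;> simp_all [show (2 * (i : ℤ) - j + 1 + 1) = 2 * i - j + 2 by ring]

lemma det_hurwitzMatrix_succ_of_nonpos (d : ℤ → ℝ) (hd : ∀ m ≤ 0, d m = 0) (k : ℕ) :
    (hurwitzMatrix d (k + 1)).det = d 1 * (hurwitzMatrix (fun m => d (m + 1)) k).det := by
  rw [det_succ_row_zero, Fin.sum_univ_succ, Finset.sum_eq_zero]
  · have hminor : (hurwitzMatrix d (k + 1)).submatrix Fin.succ Fin.succ =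
        hurwitzMatrix (fun m => d (m + 1)) k := by
      ext i j
      simp only [submatrix_apply, hurwitzMatrix_apply, Fin.val_succ]
      push_cast
      ring_nf
    simp [hminor, hurwitzMatrix_apply]
  · intro j _
    simp [hurwitzMatrix_apply, hd (-j)]

theorem det_hurwitzMatrix_succ (c : ℤ → ℝ) (hc : ∀ m < 0, c m = 0) (hc1 : c 1 ≠ 0) (k : ℕ) :
    (hurwitzMatrix c (k + 1)).det = c 1 * (hurwitzMatrix (routhStep c) k).det := by
  calc (hurwitzMatrix c (k + 1)).det
      = (hurwitzMatrix c (k + 1) * routhElimMatrix (c 0 / c 1) (k + 1)).det := by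
        rw [det_mul, det_routhElimMatrix, mul_one]
    _ = routhElim c (c 0 / c 1) 1 * (hurwitzMatrix (routhStep c) k).det := by
        rw [hurwitzMatrix_mul_routhElimMatrix,
          det_hurwitzMatrix_succ_of_nonpos _ (routhElim_eq_zero_of_nonpos c hc hc1)]
        rfl
    _ = c 1 * (hurwitzMatrix (routhStep c) k).det := by
        simp [routhElim]

/-- For `p = ∑ₖ b (s - k) zᵏ`, `p(z) = bisectPoly b s (z²) + z · bisectPoly b (s - 1) (z²)`. -/
noncomputable def bisectPoly (c : ℤ → ℝ) (n : ℤ) : ℝ[X] :=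
  ∑ m ∈ Finset.range (n.toNat + 1), C (c (n - 2 * m)) * X ^ m

lemma coeff_bisectPoly (c : ℤ → ℝ) (hc : ∀ m < 0, c m = 0) (n : ℤ) (m : ℕ) :
    (bisectPoly c n).coeff m = c (n - 2 * m) := by
  simp only [bisectPoly, finsetSum_coeff, coeff_C_mul, coeff_X_pow, mul_ite, mul_one, mul_zero,
    Finset.sum_ite_eq, Finset.mem_range]
  split_ifs with hm
  · rfl
  · rw [hc]; omega

lemma bisectPoly_routhElim_of_even (c : ℤ → ℝ) (hc : ∀ m < 0, c m = 0) (t : ℝ) {n : ℤ}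
    (hn : Even n) :
    bisectPoly (routhElim c t) n = bisectPoly c n - C t * bisectPoly c (n + 1) := by
  ext m
  simp only [coeff_sub, coeff_C_mul, coeff_bisectPoly _ hc,
    coeff_bisectPoly _ (routhElim_eq_zero_of_neg c hc t), routhElim]
  rw [if_pos (by grind)]
  ring_nf

lemma bisectPoly_routhElim_of_odd (c : ℤ → ℝ) (hc : ∀ m < 0, c m = 0) (t : ℝ) {n : ℤ}
    (hn : Odd n) : bisectPoly (routhElim c t) n = bisectPoly c n := by
  ext m
  simp only [coeff_bisectPoly _ hc, coeff_bisectPoly _ (routhElim_eq_zero_of_neg c hc t),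
    routhElim]
  rw [if_neg (by grind)]

lemma bisectPoly_add_two (c : ℤ → ℝ) (hc : ∀ m < 0, c m = 0) {n : ℤ} (hn : c (n + 2) = 0) :
    bisectPoly c (n + 2) = X * bisectPoly c n := by
  ext (_ | m)
  · simpa [coeff_bisectPoly _ hc] using hn
  · simp only [coeff_X_mul, coeff_bisectPoly _ hc]
    push_cast
    ring_nf

lemma bisectPoly_shift (d : ℤ → ℝ) (hd : ∀ m ≤ 0, d m = 0) (n : ℤ) :
    bisectPoly (fun m => d (m + 1)) n = bisectPoly d (n + 1) := by
  ext m
  rw [coeff_bisectPoly _ (fun m hm => hd _ (by omega)),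
    coeff_bisectPoly _ (fun m hm => hd _ hm.le)]
  ring_nf

lemma eq_expand_bisectPoly (p : ℝ[X]) (s : ℕ) (hp : p.natDegree ≤ s) (b : ℤ → ℝ)
    (hb : ∀ i : ℤ, b i = if 0 ≤ i ∧ i ≤ s then p.coeff (s - i.toNat) else 0) :
    p = expand ℝ 2 (bisectPoly b s) + X * expand ℝ 2 (bisectPoly b (s - 1)) := by
  have hneg : ∀ m < 0, b m = 0 := fun m hm => by simp [hb, hm.not_ge]
  have hcoeff (k : ℕ) : b (s - k) = p.coeff k := by
    rw [hb]
    split_ifs with hk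
    · congr; omega
    · exact (coeff_eq_zero_of_natDegree_lt (by omega)).symm
  ext (_ | k)
  · simpa [coeff_expand, coeff_bisectPoly _ hneg] using (hcoeff 0).symm
  · rw [coeff_add, coeff_X_mul]
    rcases Nat.even_or_odd' k with ⟨m, rfl | rfl⟩
    · simp [coeff_expand, coeff_bisectPoly _ hneg, ← hcoeff]
      ring_nf
    · rw [show 2 * m + 1 + 1 = 2 * (m + 1) by ring]
      simp [coeff_expand, coeff_bisectPoly _ hneg, ← hcoeff]

/-- For the bisection `(h, g)` of `p`, this says that `p` has exactly one pair of nonzero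
imaginary roots `±i√(-u₀)`, both simple. -/
def HasUniqueNegCommonRoot (h g : ℝ[X]) : Prop :=
  ∃ u₀ < 0, (∀ u, h.eval u = 0 ∧ g.eval u = 0 ↔ u = u₀) ∧
    ¬(h.derivative.eval u₀ = 0 ∧ g.derivative.eval u₀ = 0)

namespace HasUniqueNegCommonRoot

lemma symm {h g : ℝ[X]} (H : HasUniqueNegCommonRoot h g) : HasUniqueNegCommonRoot g h := by
  obtain ⟨u₀, hu₀, hroot, hder⟩ := H
  exact ⟨u₀, hu₀, fun u => and_comm.trans (hroot u), fun h' => hder h'.symm⟩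

lemma add_mul_right_left {h g : ℝ[X]} (H : HasUniqueNegCommonRoot h g) (q : ℝ[X]) :
    HasUniqueNegCommonRoot (h + q * g) g := by
  obtain ⟨u₀, hu₀, hroot, hder⟩ := H
  have hg₀ : g.eval u₀ = 0 := ((hroot u₀).2 rfl).2
  refine ⟨u₀, hu₀, fun u => ?_, fun ⟨h₁, h₂⟩ => hder ⟨?_, h₂⟩⟩
  · rw [← hroot u]
    constructor <;> rintro ⟨h₁, h₂⟩ <;> simp_all
  · simpa [derivative_mul, hg₀, h₂] using h₁

lemma add_mul_right_right {h g : ℝ[X]} (H : HasUniqueNegCommonRoot h g) (q : ℝ[X]) :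
    HasUniqueNegCommonRoot h (g + q * h) :=
  (H.symm.add_mul_right_left q).symm

end HasUniqueNegCommonRoot

lemma hasUniqueNegCommonRoot_linear {a b : ℝ} (ha : 0 < a) (hb : 0 < b) :
    HasUniqueNegCommonRoot (C b + C a * X) 0 := by
  refine ⟨-(b / a), by simp [div_pos hb ha], fun u => ?_, by simp [ha.ne']⟩
  simp only [eval_add, eval_C, eval_mul, eval_X, eval_zero, and_true]
  constructor <;> intro h
  · field_simp; linarith
  · subst h; field_simp; ring

lemma hasUniqueNegCommonRoot_bisectPoly_of_routhStep (c : ℤ → ℝ) (hc : ∀ m < 0, c m = 0)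
    (hc1 : c 1 ≠ 0) {n : ℤ} (hn : c (n + 2) = 0)
    (H : HasUniqueNegCommonRoot (bisectPoly (routhStep c) n) (bisectPoly (routhStep c) (n - 1))) :
    HasUniqueNegCommonRoot (bisectPoly c (n + 1)) (bisectPoly c n) := by
  have hd := routhElim_eq_zero_of_nonpos c hc hc1
  unfold routhStep at H
  rw [bisectPoly_shift _ hd, bisectPoly_shift _ hd, sub_add_cancel] at H
  rcases Int.even_or_odd n with hn' | hn'
  · rw [bisectPoly_routhElim_of_odd c hc _ hn'.add_one,
      bisectPoly_routhElim_of_even c hc _ hn'] at H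
    simpa only [sub_add_cancel] using H.add_mul_right_right (C (c 0 / c 1))
  · rw [bisectPoly_routhElim_of_even c hc _ hn'.add_one, bisectPoly_routhElim_of_odd c hc _ hn',
      add_assoc, one_add_one_eq_two, bisectPoly_add_two c hc hn] at H
    have := H.add_mul_right_left (C (c 0 / c 1) * X)
    rwa [_root_.mul_assoc, sub_add_cancel] at this

theorem hasUniqueNegCommonRoot_bisectPoly (n : ℕ) (hn : 2 ≤ n) (c : ℤ → ℝ)
    (hc : ∀ m < 0, c m = 0) (hc_top : ∀ m > (n : ℤ), c m = 0) (hc0 : 0 < c 0) (hcn : 0 < c n)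
    (hpos : ∀ l : ℕ, 1 ≤ l → l ≤ n - 2 → 0 < (hurwitzMatrix c l).det)
    (hzero : (hurwitzMatrix c (n - 1)).det = 0) :
    HasUniqueNegCommonRoot (bisectPoly c n) (bisectPoly c (n - 1)) := by
  induction n, hn using Nat.le_induction generalizing c with
  | base =>
    have hc1 : c 1 = 0 := (det_hurwitzMatrix_one c).symm.trans hzero
    have hh : bisectPoly c 2 = C (c 2) + C (c 0) * X := by
      ext (_ | _ | m) <;> simp [coeff_bisectPoly _ hc, coeff_X, coeff_C, hc]
    have hg : bisectPoly c 1 = 0 := by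
      ext (_ | m)
      · simpa [coeff_bisectPoly _ hc] using hc1
      · rw [coeff_bisectPoly _ hc, coeff_zero]
        exact hc _ (by omega)
    simpa [hh, hg] using hasUniqueNegCommonRoot_linear hc0 hcn
  | succ n hn ih =>
    have hc1 : 0 < c 1 := det_hurwitzMatrix_one c ▸ hpos 1 le_rfl (by omega)
    have hdet (k : ℕ) := det_hurwitzMatrix_succ c hc hc1.ne' k
    rw [Nat.add_sub_cancel] at hzero
    push_cast at hc_top hcn ⊢
    have hstep_neg : ∀ m < 0, routhStep c m = 0 :=
      fun m hm => routhElim_eq_zero_of_nonpos c hc hc1.ne' _ (by omega)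
    have hstep_top : ∀ m > (n : ℤ), routhStep c m = 0 := fun m hm => by
      rw [routhStep_of_eq_zero c (hc_top (m + 2) (by omega))]
      exact hc_top _ (by omega)
    have H := ih (routhStep c) hstep_neg hstep_top
      (by rwa [routhStep_zero])
      (by rwa [routhStep_of_eq_zero c (hc_top _ (by omega))])
      (fun l hl₁ hl₂ => pos_of_mul_pos_right (hdet l ▸ hpos (l + 1) (by omega) (by omega)) hc1.le)
      (by
        have h := hdet (n - 1)
        rw [Nat.sub_add_cancel (by omega), hzero] at h
        exact (mul_eq_zero.1 h.symm).resolve_left hc1.ne')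
    simpa using hasUniqueNegCommonRoot_bisectPoly_of_routhStep c hc hc1.ne' (hc_top _ (by omega)) H

lemma aeval_I_mul_expand_two (q : ℝ[X]) (y : ℝ) :
    aeval (I * y) (expand ℝ 2 q) = ((q.eval (-y ^ 2) : ℝ) : ℂ) := by
  have hsq : (I * y) ^ 2 = algebraMap ℝ ℂ (-y ^ 2) := by simp [mul_pow]
  rw [expand_aeval, hsq, aeval_algebraMap_apply, coe_aeval_eq_eval, Complex.coe_algebraMap]

lemma ofReal_add_I_mul_ofReal_eq_zero {a b : ℝ} : (a : ℂ) + I * b = 0 ↔ a = 0 ∧ b = 0 := by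
  simp [Complex.ext_iff]

section ImaginaryAxis

variable {p h g : ℝ[X]} (hp : p = expand ℝ 2 h + X * expand ℝ 2 g)
include hp

lemma eval_map_I_mul (y : ℝ) : (p.map (algebraMap ℝ ℂ)).eval (I * y) =
    ((h.eval (-y ^ 2) : ℝ) : ℂ) + I * ((y * g.eval (-y ^ 2) : ℝ) : ℂ) := by
  rw [eval_map_algebraMap, hp]
  simp only [map_add, map_mul, aeval_X, aeval_I_mul_expand_two]
  push_cast
  ring

lemma eval_derivative_map_I_mul (y : ℝ) : (p.map (algebraMap ℝ ℂ)).derivative.eval (I * y) =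
    ((g.eval (-y ^ 2) - 2 * y ^ 2 * g.derivative.eval (-y ^ 2) : ℝ) : ℂ) +
      I * ((2 * y * h.derivative.eval (-y ^ 2) : ℝ) : ℂ) := by
  rw [derivative_map, eval_map_algebraMap, hp]
  simp only [derivative_mul, derivative_X, derivative_expand, map_add, map_mul,
    aeval_X, aeval_I_mul_expand_two, one_mul, map_pow, map_natCast]
  push_cast
  ring_nf
  simp only [I_sq]
  ring

lemma isRoot_map_I_mul_iff (y : ℝ) : (p.map (algebraMap ℝ ℂ)).IsRoot (I * y) ↔
    h.eval (-y ^ 2) = 0 ∧ y * g.eval (-y ^ 2) = 0 := by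
  rw [IsRoot, eval_map_I_mul hp, ofReal_add_I_mul_ofReal_eq_zero]

lemma rootMultiplicity_map_I_mul_eq_one (hp0 : p ≠ 0) {y : ℝ} (hy : y ≠ 0)
    (hroot : h.eval (-y ^ 2) = 0 ∧ g.eval (-y ^ 2) = 0)
    (hder : ¬(h.derivative.eval (-y ^ 2) = 0 ∧ g.derivative.eval (-y ^ 2) = 0)) :
    (p.map (algebraMap ℝ ℂ)).rootMultiplicity (I * y) = 1 := by
  have hP : p.map (algebraMap ℝ ℂ) ≠ 0 :=
    (Polynomial.map_ne_zero_iff (algebraMap ℝ ℂ).injective).2 hp0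
  have hP_root : (p.map (algebraMap ℝ ℂ)).IsRoot (I * y) :=
    (isRoot_map_I_mul_iff hp y).2 ⟨hroot.1, by simp [hroot.2]⟩
  have hP'_root : ¬(p.map (algebraMap ℝ ℂ)).derivative.IsRoot (I * y) := by
    rw [IsRoot, eval_derivative_map_I_mul hp, ofReal_add_I_mul_ofReal_eq_zero, hroot.2]
    refine fun ⟨h₁, h₂⟩ => hder ⟨?_, ?_⟩
    · simpa [hy] using h₂
    · simpa [hy] using h₁
  have := (rootMultiplicity_pos hP).2 hP_root
  have := (one_lt_rootMultiplicity_iff_isRoot hP).not.2 (fun h => hP'_root h.2)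
  omega

end ImaginaryAxis

theorem exists_simple_imaginary_roots {p h g : ℝ[X]} (hp : p = expand ℝ 2 h + X * expand ℝ 2 g)
    (H : HasUniqueNegCommonRoot h g) (hp0 : p.coeff 0 ≠ 0) :
    ∃ ω : ℝ, 0 < ω ∧
      (p.map (algebraMap ℝ ℂ)).rootMultiplicity (I * ω) = 1 ∧
      (p.map (algebraMap ℝ ℂ)).rootMultiplicity (-(I * ω)) = 1 ∧
      ∀ z : ℂ, z.re = 0 → (p.map (algebraMap ℝ ℂ)).IsRoot z → z = I * ω ∨ z = -(I * ω) := by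
  obtain ⟨u₀, hu₀, hroot, hder⟩ := H
  have hp0' : p ≠ 0 := fun h0 => hp0 (by simp [h0])
  set ω := √(-u₀)
  have hω : 0 < ω := Real.sqrt_pos.2 (neg_pos.2 hu₀)
  have hω_sq (y : ℝ) : -y ^ 2 = u₀ ↔ y = ω ∨ y = -ω := by
    rw [← sq_eq_sq_iff_eq_or_eq_neg, Real.sq_sqrt (by linarith)]
    constructor <;> intro <;> linarith
  have hsimple (y : ℝ) (hy : y = ω ∨ y = -ω) :
      (p.map (algebraMap ℝ ℂ)).rootMultiplicity (I * y) = 1 := by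
    have hy₀ := (hω_sq y).2 hy
    refine rootMultiplicity_map_I_mul_eq_one hp hp0' ?_ ((hroot _).2 hy₀) (hy₀ ▸ hder)
    rcases hy with rfl | rfl <;> simp [hω.ne']
  refine ⟨ω, hω, hsimple ω (.inl rfl), by simpa using hsimple (-ω) (.inr rfl),
    fun z hz hzroot => ?_⟩
  have hz' : z = I * z.im := by apply Complex.ext <;> simp [hz]
  rw [hz', isRoot_map_I_mul_iff hp] at hzroot
  have him : z.im ≠ 0 := by
    rintro him
    rw [him] at hzroot
    exact hp0 (by simpa [hp, coeff_zero_eq_eval_zero] using hzroot.1)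
  rcases (hω_sq z.im).1 ((hroot _).1 ⟨hzroot.1, (mul_eq_zero.1 hzroot.2).resolve_left him⟩)
    with h | h
  · left; rw [hz', h]
  · right; rw [hz', h]; push_cast; ring

/-- Let `p(z) = z^s + b_1 z^(s-1) + … + b_s` be a monic real polynomial of degree
`s ≥ 2` whose Hurwitz determinants satisfy `b_s > 0`,
`det G_1 > 0, …, det G_(s-2) > 0` and `det G_(s-1) = 0`.  Then there exists
`ω > 0` such that `iω` and `−iω` are simple roots of `p` (over `ℂ`), and `p` has
no other roots on the imaginary axis. -/
theorem hurwitz_single_imaginary_pair (s : ℕ) (hs : 2 ≤ s) (p : Polynomial ℝ)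
    (hmonic : p.Monic) (hdeg : p.natDegree = s)
    (b : ℤ → ℝ)
    (hb : ∀ i : ℤ, b i = if 0 ≤ i ∧ i ≤ (s : ℤ) then p.coeff (s - i.toNat) else 0)
    (hbs : 0 < p.coeff 0)
    (hpos : ∀ l : ℕ, 1 ≤ l → l ≤ s - 2 → 0 < (hurwitzMatrix b l).det)
    (hzero : (hurwitzMatrix b (s - 1)).det = 0) :
    ∃ ω : ℝ, 0 < ω ∧
      (p.map (algebraMap ℝ ℂ)).rootMultiplicity (Complex.I * ω) = 1 ∧
      (p.map (algebraMap ℝ ℂ)).rootMultiplicity (-(Complex.I * ω)) = 1 ∧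
      ∀ z : ℂ, z.re = 0 → (p.map (algebraMap ℝ ℂ)).IsRoot z →
        z = Complex.I * ω ∨ z = -(Complex.I * ω) := by
  have hb_neg : ∀ m < 0, b m = 0 := fun m hm => by simp [hb, hm.not_ge]
  have hb_top : ∀ m > (s : ℤ), b m = 0 := fun m hm => by simp [hb, hm.not_ge]
  have hb₀ : b 0 = 1 := by simpa [hb, ← hdeg] using hmonic.coeff_natDegree
  have hb_s : b s = p.coeff 0 := by simp [hb]
  refine exists_simple_imaginary_roots (eq_expand_bisectPoly p s hdeg.le b hb) ?_ hbs.ne'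
  exact hasUniqueNegCommonRoot_bisectPoly s hs b hb_neg hb_top (hb₀ ▸ one_pos) (hb_s ▸ hbs)
    hpos hzero
end

section
/- Let k_1, …, k_8 > 0 be rate constants, λ > 0, and x_1, x_2 > 0 arbitrary. Define x_3 = λ/(k_1 x_1), x_4 = λ/(k_3 x_1), x_5 = λ/(k_7 x_2), x_6 = λ/(k_5 x_2), x_7 = λ/k_2, x_8 = λ/k_4, x_9 = λ/k_8, x_10 = λ/k_6. Then g_k(x) = 0; in particular every choice of λ > 0, x_1 > 0, x_2 > 0 yields a positive steady state of the mass-action ODE system. -/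
open Matrix

/-- The mass-action vector field of the irreversible cyclic distributive
double-phosphorylation network: `gvec k x i` is the component `g_(i+1)` for
rate constants `k = (k_1, …, k_8)` (0-indexed) and concentrations
`x = (x_1, …, x_10)` (0-indexed). -/
def gvec (k : Fin 8 → ℝ) (x : Fin 10 → ℝ) : Fin 10 → ℝ :=
  ![ -(k 0) * x 0 * x 2 - k 2 * x 0 * x 3 + k 1 * x 6 + k 3 * x 7,
     k 5 * x 9 - k 6 * x 1 * x 4 - k 4 * x 1 * x 5 + k 7 * x 8,
     -(k 0) * x 0 * x 2 + k 7 * x 8,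
     -(k 2) * x 0 * x 3 + k 1 * x 6,
     k 5 * x 9 - k 6 * x 1 * x 4,
     -(k 4) * x 1 * x 5 + k 3 * x 7,
     k 0 * x 0 * x 2 - k 1 * x 6,
     k 2 * x 0 * x 3 - k 3 * x 7,
     k 6 * x 1 * x 4 - k 7 * x 8,
     -(k 5) * x 9 + k 4 * x 1 * x 5 ]

/-! At the parametrized point every one of the eight reactions of the network runs with the
same flux `λ`. Each component of `g_k` is a signed sum of reaction fluxes in which every
reaction entering with `+` is matched by one entering with `-`, so equal fluxes cancel. -/

def reactionFlux (k : Fin 8 → ℝ) (x : Fin 10 → ℝ) : Fin 8 → ℝ :=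
  ![k 0 * x 0 * x 2, k 1 * x 6, k 2 * x 0 * x 3, k 3 * x 7,
    k 4 * x 1 * x 5, k 5 * x 9, k 6 * x 1 * x 4, k 7 * x 8]

theorem gvec_eq_zero_of_reactionFlux_eq {k : Fin 8 → ℝ} {x : Fin 10 → ℝ} {c : ℝ}
    (h : ∀ j, reactionFlux k x j = c) : gvec k x = 0 := by
  have h0 := h 0; have h1 := h 1; have h2 := h 2; have h3 := h 3
  have h4 := h 4; have h5 := h 5; have h6 := h 6; have h7 := h 7
  simp [reactionFlux] at h0 h1 h2 h3 h4 h5 h6 h7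
  funext i
  fin_cases i <;> simp [gvec] <;> linarith

/-- For any positive rate constants `k_1, …, k_8`, any `λ > 0` and any
`x_1, x_2 > 0`, setting `x_3 = λ/(k_1 x_1)`, `x_4 = λ/(k_3 x_1)`,
`x_5 = λ/(k_7 x_2)`, `x_6 = λ/(k_5 x_2)`, `x_7 = λ/k_2`, `x_8 = λ/k_4`,
`x_9 = λ/k_8`, `x_10 = λ/k_6` yields `g_k(x) = 0`; in particular every such
choice gives a positive steady state of the mass-action system. -/
theorem steady_state_parameterization
    (k : Fin 8 → ℝ) (hk : ∀ i, 0 < k i) (lam : ℝ) (hlam : 0 < lam)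
    (x1 x2 : ℝ) (hx1 : 0 < x1) (hx2 : 0 < x2)
    (x : Fin 10 → ℝ)
    (hx : x = ![x1, x2, lam / (k 0 * x1), lam / (k 2 * x1),
                lam / (k 6 * x2), lam / (k 4 * x2),
                lam / k 1, lam / k 3, lam / k 7, lam / k 5]) :
    gvec k x = 0 ∧ ∀ i, 0 < x i := by
  have hk0 := hk 0; have hk1 := hk 1; have hk2 := hk 2; have hk3 := hk 3
  have hk4 := hk 4; have hk5 := hk 5; have hk6 := hk 6; have hk7 := hk 7
  subst hx
  refine ⟨gvec_eq_zero_of_reactionFlux_eq (c := lam) fun j => ?_, fun i => ?_⟩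
  · fin_cases j <;> simp [reactionFlux] <;> field_simp
  · fin_cases i <;> simp <;> positivity
end
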